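/- Let p, q ∈ L¹([0,π];ℝ), let Ω(x) be the 2×2 matrix with rows (p(x), q(x)) and (q(x), −p(x)), let t ∈ ℝ and μ ∈ ℝ. Let h : [0,π] → ℝ² be absolutely continuous with B h'(x) + Ω(x) h(x) = μ h(x) a.e. and ∫₀^π |h(s)|² ds = 1. Define θ(x) = 1 + (e^t − 1)∫₀^x |h(s)|² ds and Ω_t(x) = Ω(x) + ((e^t − 1)/θ(x))·(B h(x)h(x)* − h(x)h(x)* B). Then u(x) = h(x)/θ(x) is absolutely continuous and satisfies B u'(x) + Ω_t(x) u(x) = μ u(x) a.e. on [0,π]; moreover u(0) = h(0), ∫₀^π |u(x)|² dx = e^{−t}, and if h₁(π) = 0 then u₁(π) = 0. -/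

import Mathlib

/-!
`θ` is the primitive of `(e^t - 1)|h|²` with `θ 0 = 1`, and `θ π = e^t` by the normalization; since
`0 ≤ ∫₀ˣ |h|² ≤ 1`, `θ x` is a convex combination of `1` and `e^t`, hence positive on `[0, π]`.
The product rule for absolutely continuous functions gives `u' = θ⁻¹ h' - (e^t - 1)|h|² θ⁻² h`,
and the equation for `u` then reduces to `(B h h* - h h* B) h = |h|² B h`, which holds because
`h* B h = 0`. Finally `F / θ`, with `F x = ∫₀ˣ |h|²`, is a primitive of `|u|² = |h|² / θ²`
(because `θ = 1 + (e^t - 1) F`), so `∫₀^π |u|² = F π / θ π = e^{-t}`.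
-/

open MeasureTheory Real Set
open scoped Matrix

noncomputable section

/-- The matrix `B` of the canonical Dirac system. -/
def Bmat : Matrix (Fin 2) (Fin 2) ℝ := !![0, 1; -1, 0]

/-- The canonical potential matrix `Ω(x)` built from `p` and `q`. -/
def Omat (p q : ℝ → ℝ) (x : ℝ) : Matrix (Fin 2) (Fin 2) ℝ := !![p x, q x; q x, -(p x)]

/-- `θ(x) = 1 + (e^t - 1) ∫₀ˣ |h(s)|² ds`. -/
def theta (t : ℝ) (h : ℝ → Fin 2 → ℝ) (x : ℝ) : ℝ :=
  1 + (Real.exp t - 1) * ∫ s in (0:ℝ)..x, ((h s 0) ^ 2 + (h s 1) ^ 2)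

/-- The transformed potential
`Ω_t(x) = Ω(x) + ((e^t - 1)/θ(x)) (B h(x)h(x)* - h(x)h(x)* B)`. -/
def OmatT (p q : ℝ → ℝ) (t : ℝ) (h : ℝ → Fin 2 → ℝ) (x : ℝ) : Matrix (Fin 2) (Fin 2) ℝ :=
  Omat p q x + ((Real.exp t - 1) / theta t h x) •
    (Bmat * Matrix.vecMulVec (h x) (h x) - Matrix.vecMulVec (h x) (h x) * Bmat)

/-- `u(x) = h(x)/θ(x)`. -/
def uFun (t : ℝ) (h : ℝ → Fin 2 → ℝ) (x : ℝ) : Fin 2 → ℝ :=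
  (theta t h x)⁻¹ • h x

theorem absolutelyContinuousOnInterval_const_add_integral {f' : ℝ → ℝ} {a b : ℝ} (c : ℝ)
    (hf' : IntervalIntegrable f' volume a b) :
    AbsolutelyContinuousOnInterval (fun x ↦ c + ∫ s in a..x, f' s) a b :=
  contDiffOn_const.absolutelyContinuousOnInterval.add
    (hf'.absolutelyContinuousOnInterval_intervalIntegral left_mem_uIcc)

theorem integral_deriv_mul_eq_sub_of_eq_add_integral {f g f' g' : ℝ → ℝ} {a b : ℝ}
    (hf' : IntervalIntegrable f' volume a b) (hg' : IntervalIntegrable g' volume a b)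
    (hf : ∀ x ∈ uIcc a b, f x = f a + ∫ s in a..x, f' s)
    (hg : ∀ x ∈ uIcc a b, g x = g a + ∫ s in a..x, g' s) :
    ∫ x in a..b, f' x * g x + f x * g' x = f b * g b - f a * g a := by
  have key :=
    (absolutelyContinuousOnInterval_const_add_integral (f a) hf').integral_deriv_mul_eq_sub
      (absolutelyContinuousOnInterval_const_add_integral (g a) hg')
  simp only [intervalIntegral.integral_same, add_zero, ← hf b right_mem_uIcc,
    ← hg b right_mem_uIcc] at key
  rw [← key]
  refine intervalIntegral.integral_congr_ae ?_
  filter_upwards [hf'.ae_hasDerivAt_integral, hg'.ae_hasDerivAt_integral] with x hfx hgx hx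
  have hx : x ∈ uIcc a b := uIoc_subset_uIcc hx
  rw [((hfx hx a left_mem_uIcc).const_add (f a)).deriv,
    ((hgx hx a left_mem_uIcc).const_add (g a)).deriv, ← hf x hx, ← hg x hx]

theorem continuousOn_of_eq_add_integral {f f' : ℝ → ℝ} {a b : ℝ} (hab : a ≤ b)
    (hf' : IntegrableOn f' (Icc a b)) (hf : ∀ x ∈ Icc a b, f x = f a + ∫ s in a..x, f' s) :
    ContinuousOn f (Icc a b) := by
  have := intervalIntegral.continuousOn_primitive_interval (a := a) (b := b) (μ := volume)
    (uIcc_of_le hab ▸ hf')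
  rw [uIcc_of_le hab] at this
  exact (continuousOn_const.add this).congr hf

theorem inv_eq_add_integral_of_eq_add_integral {g g' : ℝ → ℝ} {a b : ℝ} (hab : a ≤ b)
    (hg' : ContinuousOn g' (Icc a b)) (hg : ∀ x ∈ Icc a b, g x = g a + ∫ s in a..x, g' s)
    (hg0 : ∀ x ∈ Icc a b, g x ≠ 0) :
    ∀ x ∈ Icc a b, (g x)⁻¹ = (g a)⁻¹ + ∫ s in a..x, -g' s / g s ^ 2 := by
  have hg_cont := continuousOn_of_eq_add_integral hab (hg'.integrableOn_Icc) hg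
  have hderiv : ∀ s ∈ Ioo a b, HasDerivAt g (g' s) s := by
    intro s hs
    have hprim := intervalIntegral.integral_hasDerivAt_right
      ((hg'.mono (Icc_subset_Icc le_rfl hs.2.le)).intervalIntegrable_of_Icc hs.1.le)
      ((hg'.mono Ioo_subset_Icc_self).stronglyMeasurableAtFilter isOpen_Ioo s hs)
      (hg'.continuousAt (Icc_mem_nhds hs.1 hs.2))
    refine (hprim.const_add (g a)).congr_of_eventuallyEq ?_
    filter_upwards [Icc_mem_nhds hs.1 hs.2] using hg
  intro x hx
  have hsub : Icc a x ⊆ Icc a b := Icc_subset_Icc le_rfl hx.2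
  rw [intervalIntegral.integral_eq_sub_of_hasDeriv_right_of_le hx.1
    ((hg_cont.mono hsub).inv₀ fun y hy ↦ hg0 y (hsub hy))
    (fun s hs ↦ ((hderiv s ⟨hs.1, hs.2.trans_le hx.2⟩).inv
      (hg0 s (hsub (Ioo_subset_Icc_self hs)))).hasDerivWithinAt)
    (((hg'.neg.div (hg_cont.pow 2) fun y hy ↦ pow_ne_zero 2 (hg0 y hy)).mono
      hsub).intervalIntegrable_of_Icc hx.1), Pi.inv_apply, Pi.inv_apply]
  ring

theorem Bmat_commutator_mulVec_self (v : Fin 2 → ℝ) :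
    (Bmat * Matrix.vecMulVec v v - Matrix.vecMulVec v v * Bmat) *ᵥ v
      = (v 0 ^ 2 + v 1 ^ 2) • Bmat *ᵥ v := by
  ext i
  fin_cases i <;>
    simp only [Bmat, Matrix.mulVec, dotProduct, Matrix.vecMulVec, Matrix.sub_apply,
      Matrix.mul_apply, Fin.sum_univ_two, Matrix.of_apply, Matrix.cons_val_zero,
      Matrix.cons_val_one, Pi.smul_apply, smul_eq_mul] <;> ring

theorem dirac_eq_of_dirac_eq_rescale (M : Matrix (Fin 2) (Fin 2) ℝ) (v v' : Fin 2 → ℝ) (μ c θ : ℝ)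
    (hv : Bmat *ᵥ v' + M *ᵥ v = μ • v) :
    Bmat *ᵥ (θ⁻¹ • v' + (-(c * (v 0 ^ 2 + v 1 ^ 2)) / θ ^ 2) • v)
      + (M + (c / θ) • (Bmat * Matrix.vecMulVec v v - Matrix.vecMulVec v v * Bmat)) *ᵥ (θ⁻¹ • v)
      = μ • (θ⁻¹ • v) := by
  simp only [Matrix.mulVec_add, Matrix.add_mulVec, Matrix.mulVec_smul, Matrix.smul_mulVec,
    Bmat_commutator_mulVec_self, eq_sub_of_add_eq hv]
  module

def uFunDeriv (t : ℝ) (h h' : ℝ → Fin 2 → ℝ) (s : ℝ) : Fin 2 → ℝ :=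
  (theta t h s)⁻¹ • h' s + (-((exp t - 1) * (h s 0 ^ 2 + h s 1 ^ 2)) / theta t h s ^ 2) • h s

section Transform

variable {t b : ℝ} {h : ℝ → Fin 2 → ℝ}

theorem theta_zero : theta t h 0 = 1 := by simp [theta]

theorem theta_eq_add_integral (x : ℝ) :
    theta t h x = theta t h 0 + ∫ s in (0:ℝ)..x, (exp t - 1) * (h s 0 ^ 2 + h s 1 ^ 2) := by
  rw [theta_zero, theta, intervalIntegral.integral_const_mul]

theorem theta_eq_exp_of_integral_eq_one (hnorm : ∫ s in (0:ℝ)..b, (h s 0 ^ 2 + h s 1 ^ 2) = 1) :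
    theta t h b = exp t := by
  rw [theta, hnorm]
  ring

theorem theta_pos (hn : IntervalIntegrable (fun s ↦ h s 0 ^ 2 + h s 1 ^ 2) volume 0 b)
    (hnorm : ∫ s in (0:ℝ)..b, (h s 0 ^ 2 + h s 1 ^ 2) = 1) {x : ℝ} (hx : x ∈ Icc 0 b) :
    0 < theta t h x := by
  have hnonneg : ∀ s, 0 ≤ h s 0 ^ 2 + h s 1 ^ 2 := fun s ↦ by positivity
  have hF_nonneg : 0 ≤ ∫ s in (0:ℝ)..x, (h s 0 ^ 2 + h s 1 ^ 2) :=
    intervalIntegral.integral_nonneg hx.1 fun s _ ↦ hnonneg s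
  have hF_le_one : ∫ s in (0:ℝ)..x, (h s 0 ^ 2 + h s 1 ^ 2) ≤ 1 :=
    hnorm ▸ intervalIntegral.integral_mono_interval le_rfl hx.1 hx.2
      (Filter.Eventually.of_forall hnonneg) hn
  have hconvex : theta t h x = (1 - ∫ s in (0:ℝ)..x, (h s 0 ^ 2 + h s 1 ^ 2))
      + (∫ s in (0:ℝ)..x, (h s 0 ^ 2 + h s 1 ^ 2)) * exp t := by
    rw [theta]
    ring
  rcases hF_nonneg.eq_or_lt with hF | hF
  · rw [hconvex, ← hF]
    simp
  · rw [hconvex]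
    exact add_pos_of_nonneg_of_pos (sub_nonneg.2 hF_le_one) (mul_pos hF (exp_pos t))

theorem continuousOn_sqNorm (hh : ContinuousOn h (Icc 0 b)) :
    ContinuousOn (fun s ↦ h s 0 ^ 2 + h s 1 ^ 2) (Icc 0 b) :=
  (((continuous_apply 0).comp_continuousOn hh).pow 2).add
    (((continuous_apply 1).comp_continuousOn hh).pow 2)

theorem continuousOn_theta (hb : 0 ≤ b) (hh : ContinuousOn h (Icc 0 b)) :
    ContinuousOn (theta t h) (Icc 0 b) :=
  continuousOn_of_eq_add_integral hb
    ((continuousOn_const.mul (continuousOn_sqNorm hh)).integrableOn_Icc)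
    fun x _ ↦ theta_eq_add_integral x

theorem inv_theta_eq_add_integral (hh : ContinuousOn h (Icc 0 b))
    (hnorm : ∫ s in (0:ℝ)..b, (h s 0 ^ 2 + h s 1 ^ 2) = 1) {x : ℝ} (hx : x ∈ Icc 0 b) :
    (theta t h x)⁻¹ = (theta t h 0)⁻¹
      + ∫ s in (0:ℝ)..x, -((exp t - 1) * (h s 0 ^ 2 + h s 1 ^ 2)) / theta t h s ^ 2 :=
  have hb : 0 ≤ b := hx.1.trans hx.2
  inv_eq_add_integral_of_eq_add_integral hb (continuousOn_const.mul (continuousOn_sqNorm hh))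
    (fun y _ ↦ theta_eq_add_integral y)
    (fun _ hy ↦ (theta_pos ((continuousOn_sqNorm hh).intervalIntegrable_of_Icc hb) hnorm hy).ne')
    x hx

theorem continuousOn_inv_theta_deriv (hb : 0 ≤ b) (hh : ContinuousOn h (Icc 0 b))
    (hnorm : ∫ s in (0:ℝ)..b, (h s 0 ^ 2 + h s 1 ^ 2) = 1) :
    ContinuousOn (fun s ↦ -((exp t - 1) * (h s 0 ^ 2 + h s 1 ^ 2)) / theta t h s ^ 2)
      (Icc 0 b) :=
  (continuousOn_const.mul (continuousOn_sqNorm hh)).neg.div ((continuousOn_theta hb hh).pow 2)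
    fun _ hy ↦ pow_ne_zero 2
      (theta_pos ((continuousOn_sqNorm hh).intervalIntegrable_of_Icc hb) hnorm hy).ne'

theorem integrableOn_uFunDeriv {h' : ℝ → Fin 2 → ℝ} (hb : 0 ≤ b) (hh : ContinuousOn h (Icc 0 b))
    (hh' : IntegrableOn h' (Icc 0 b)) (hnorm : ∫ s in (0:ℝ)..b, (h s 0 ^ 2 + h s 1 ^ 2) = 1) :
    IntegrableOn (uFunDeriv t h h') (Icc 0 b) :=
  (hh'.continuousOn_smul ((continuousOn_theta hb hh).inv₀ fun _ hy ↦
      (theta_pos ((continuousOn_sqNorm hh).intervalIntegrable_of_Icc hb) hnorm hy).ne')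
    isCompact_Icc).add
    (((continuousOn_inv_theta_deriv hb hh hnorm).smul hh).integrableOn_Icc)

theorem uFun_eq_add_integral {h' : ℝ → Fin 2 → ℝ} (hh' : IntegrableOn h' (Icc 0 b))
    (hhAC : ∀ x ∈ Icc 0 b, ∀ i : Fin 2, h x i = h 0 i + ∫ s in (0:ℝ)..x, h' s i)
    (hh : ContinuousOn h (Icc 0 b)) (hnorm : ∫ s in (0:ℝ)..b, (h s 0 ^ 2 + h s 1 ^ 2) = 1)
    {x : ℝ} (hx : x ∈ Icc 0 b) (i : Fin 2) :
    uFun t h x i = uFun t h 0 i + ∫ s in (0:ℝ)..x, uFunDeriv t h h' s i := by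
  have hb : 0 ≤ b := hx.1.trans hx.2
  have hsub : uIcc 0 x ⊆ Icc 0 b := uIcc_of_le hx.1 ▸ Icc_subset_Icc le_rfl hx.2
  have hh'_i : IntegrableOn (fun s ↦ h' s i) (Icc 0 b) := hh'.eval i
  have key := integral_deriv_mul_eq_sub_of_eq_add_integral
    ((hh'_i.mono_set hsub).intervalIntegrable)
    (((continuousOn_inv_theta_deriv hb hh hnorm).mono hsub).intervalIntegrable)
    (fun y hy ↦ hhAC y (hsub hy) i)
    (fun y hy ↦ inv_theta_eq_add_integral (t := t) hh hnorm (hsub hy))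
  have hintegrand : ∀ s, uFunDeriv t h h' s i = h' s i * (theta t h s)⁻¹
      + h s i * (-((exp t - 1) * (h s 0 ^ 2 + h s 1 ^ 2)) / theta t h s ^ 2) := fun s ↦ by
    simp only [uFunDeriv, Pi.add_apply, Pi.smul_apply, smul_eq_mul]
    ring
  simp only [uFun, Pi.smul_apply, smul_eq_mul]
  rw [intervalIntegral.integral_congr fun s _ ↦ hintegrand s, key]
  ring

theorem integral_sqNorm_uFun (hb : 0 ≤ b) (hh : ContinuousOn h (Icc 0 b))
    (hnorm : ∫ s in (0:ℝ)..b, (h s 0 ^ 2 + h s 1 ^ 2) = 1) :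
    ∫ x in (0:ℝ)..b, (uFun t h x 0 ^ 2 + uFun t h x 1 ^ 2) = exp (-t) := by
  have key := integral_deriv_mul_eq_sub_of_eq_add_integral
    (f := fun x ↦ ∫ s in (0:ℝ)..x, (h s 0 ^ 2 + h s 1 ^ 2)) (g := fun x ↦ (theta t h x)⁻¹)
    ((continuousOn_sqNorm hh).intervalIntegrable_of_Icc hb)
    ((continuousOn_inv_theta_deriv hb hh hnorm).intervalIntegrable_of_Icc hb)
    (fun x _ ↦ by simp) (fun x hx ↦ inv_theta_eq_add_integral hh hnorm (uIcc_of_le hb ▸ hx))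
  simp only [hnorm, theta_eq_exp_of_integral_eq_one hnorm, intervalIntegral.integral_same, zero_mul,
    sub_zero, one_mul] at key
  rw [exp_neg, ← key]
  refine intervalIntegral.integral_congr fun x hx ↦ ?_
  have hθ := (theta_pos ((continuousOn_sqNorm hh).intervalIntegrable_of_Icc hb) hnorm
    (t := t) (uIcc_of_le hb ▸ hx)).ne'
  simp only [uFun, Pi.smul_apply, smul_eq_mul]
  have hθ_def : theta t h x
      = 1 + (exp t - 1) * ∫ s in (0:ℝ)..x, (h s 0 ^ 2 + h s 1 ^ 2) := rfl
  field_simp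
  rw [hθ_def]
  ring

end Transform

theorem stmt_3_general (p q : ℝ → ℝ)
    (t mu : ℝ)
    (h h' : ℝ → Fin 2 → ℝ)
    -- h is absolutely continuous on [0,π] with integrable derivative h':
    (hh'int : IntegrableOn h' (Icc (0:ℝ) π))
    (hhAC : ∀ x ∈ Icc (0:ℝ) π, ∀ i : Fin 2, h x i = h 0 i + ∫ s in (0:ℝ)..x, h' s i)
    -- B h' + Ω h = μ h a.e. on [0,π]:
    (hhode : ∀ᵐ x ∂(volume.restrict (Icc (0:ℝ) π)),
      Bmat.mulVec (h' x) + (Omat p q x).mulVec (h x) = mu • h x)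
    -- normalization:
    (hhnorm : (∫ s in (0:ℝ)..π, ((h s 0) ^ 2 + (h s 1) ^ 2)) = 1) :
    -- u = h/θ is absolutely continuous and solves B u' + Ω_t u = μ u a.e. on [0,π]:
    (∃ z : ℝ → Fin 2 → ℝ, IntegrableOn z (Icc (0:ℝ) π) ∧
      (∀ x ∈ Icc (0:ℝ) π, ∀ i : Fin 2,
        uFun t h x i = uFun t h 0 i + ∫ s in (0:ℝ)..x, z s i) ∧
      (∀ᵐ x ∂(volume.restrict (Icc (0:ℝ) π)),
        Bmat.mulVec (z x) + (OmatT p q t h x).mulVec (uFun t h x) = mu • uFun t h x)) ∧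
    -- u(0) = h(0):
    uFun t h 0 = h 0 ∧
    -- the squared L² norm of u is e^{-t}:
    (∫ x in (0:ℝ)..π, ((uFun t h x 0) ^ 2 + (uFun t h x 1) ^ 2)) = Real.exp (-t) ∧
    -- preservation of the boundary condition at π:
    (h π 0 = 0 → uFun t h π 0 = 0) := by
  have hπ : (0:ℝ) ≤ π := pi_pos.le
  have hh : ContinuousOn h (Icc 0 π) := continuousOn_pi.2 fun i ↦
    continuousOn_of_eq_add_integral hπ (hh'int.eval i) fun x hx ↦ hhAC x hx i
  refine ⟨⟨uFunDeriv t h h', integrableOn_uFunDeriv hπ hh hh'int hhnorm,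
    fun x hx i ↦ uFun_eq_add_integral hh'int hhAC hh hhnorm hx i, ?_⟩,
    by simp [uFun, theta_zero], integral_sqNorm_uFun hπ hh hhnorm, fun hπ0 ↦ by simp [uFun, hπ0]⟩
  filter_upwards [hhode] with x hx
  exact dirac_eq_of_dirac_eq_rescale _ _ _ _ _ _ hx

/-- The `m`-th eigenfunction part of Theorem 1.2: if `h` is the normalized
eigenfunction for the eigenvalue `μ` of `L(Ω,α)`, then `u = h/θ` is an eigenfunction
of the transformed problem for the same eigenvalue, with squared `L²` norm `e^{-t}`,
and the boundary condition at `π` is preserved. -/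
theorem stmt_3 (p q : ℝ → ℝ)
    (hp : IntegrableOn p (Icc (0:ℝ) π)) (hq : IntegrableOn q (Icc (0:ℝ) π))
    (t mu : ℝ)
    (h h' : ℝ → Fin 2 → ℝ)
    -- h is absolutely continuous on [0,π] with integrable derivative h':
    (hh'int : IntegrableOn h' (Icc (0:ℝ) π))
    (hhAC : ∀ x ∈ Icc (0:ℝ) π, ∀ i : Fin 2, h x i = h 0 i + ∫ s in (0:ℝ)..x, h' s i)
    -- B h' + Ω h = μ h a.e. on [0,π]:
    (hhode : ∀ᵐ x ∂(volume.restrict (Icc (0:ℝ) π)),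
      Bmat.mulVec (h' x) + (Omat p q x).mulVec (h x) = mu • h x)
    -- normalization:
    (hhnorm : (∫ s in (0:ℝ)..π, ((h s 0) ^ 2 + (h s 1) ^ 2)) = 1) :
    -- u = h/θ is absolutely continuous and solves B u' + Ω_t u = μ u a.e. on [0,π]:
    (∃ z : ℝ → Fin 2 → ℝ, IntegrableOn z (Icc (0:ℝ) π) ∧
      (∀ x ∈ Icc (0:ℝ) π, ∀ i : Fin 2,
        uFun t h x i = uFun t h 0 i + ∫ s in (0:ℝ)..x, z s i) ∧
      (∀ᵐ x ∂(volume.restrict (Icc (0:ℝ) π)),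
        Bmat.mulVec (z x) + (OmatT p q t h x).mulVec (uFun t h x) = mu • uFun t h x)) ∧
    -- u(0) = h(0):
    uFun t h 0 = h 0 ∧
    -- the squared L² norm of u is e^{-t}:
    (∫ x in (0:ℝ)..π, ((uFun t h x 0) ^ 2 + (uFun t h x 1) ^ 2)) = Real.exp (-t) ∧
    -- preservation of the boundary condition at π:
    (h π 0 = 0 → uFun t h π 0 = 0) :=
  stmt_3_general p q t mu h h' hh'int hhAC hhode hhnorm
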